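/- arXiv:2110.00164 — 3 statements merged into one kernel-verified Lean document; each statement's English description precedes it below -/
import Mathlib

section
/- Let T be a semistandard Young tableau of partition shape. For every j ≥ 1, the set of entries of column j of the right key K_+(T) equals ∅ ⋆ word(T_{≥j}), where T_{≥j} is T with its first j−1 columns removed. -/
/-- `S ⋆ m`: replace the largest element of `S` that is `≤ m` by `m`,
or insert `m` if no such element exists. -/
def starOne (S : Finset ℕ) (m : ℕ) : Finset ℕ :=
  if h : (S.filter (fun x => x ≤ m)).Nonempty then
    insert m (S.erase ((S.filter (fun x => x ≤ m)).max' h))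
  else insert m S

/-- `S ⋆ w` for a word `w`. -/
def starWord (S : Finset ℕ) (w : List ℕ) : Finset ℕ := w.foldl starOne S

/-- A semistandard Young tableau filling, encoded by its list of columns
(left to right), each column listed top to bottom: columns strictly
increase downwards, column lengths weakly decrease (partition shape), and
rows weakly increase to the right. -/
def IsSSYTFill (P : List (List ℕ)) : Prop :=
  (∀ c ∈ P, List.Chain' (· < ·) c) ∧
  List.Chain' (fun c d => d.length ≤ c.length ∧
    ∀ r, r < d.length → c.getD r 0 ≤ d.getD r 0) P

/-- The column word of an SSYT filling: columns left to right, each read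
bottom to top. -/
def fillWord (P : List (List ℕ)) : List ℕ := (P.map List.reverse).flatten

/-- `P` is obtained from the set-valued filling `T` by choosing one element
in each cell. -/
def IsChoice (P : List (List ℕ)) (T : List (List (Finset ℕ))) : Prop :=
  List.Forall₂ (List.Forall₂ (· ∈ ·)) P T

/-- A set-valued tableau: all cells are nonempty finite sets, and every
choice of one element per cell yields an SSYT. -/
def IsSVT (T : List (List (Finset ℕ))) : Prop :=
  (∀ c ∈ T, ∀ S ∈ c, S.Nonempty) ∧
  ∀ P, IsChoice P T → IsSSYTFill P

/-- The word of a cell: its elements listed increasingly. -/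
def cellWord (S : Finset ℕ) : List ℕ := S.sort (· ≤ ·)

/-- The column word of a set-valued tableau. -/
def svtWord (T : List (List (Finset ℕ))) : List ℕ :=
  (T.map (fun c => (c.reverse.map cellWord).flatten)).flatten

/-- Column `j` (0-indexed) of the right key `K₊(T)` of a set-valued tableau,
computed as `∅ ⋆ word(T_{≥ j})`. -/
def svtKeyCol (T : List (List (Finset ℕ))) (j : ℕ) : Finset ℕ :=
  starWord ∅ (svtWord (T.drop j))

/-- Column `j` (0-indexed) of the key `key(α)` of a weak composition `α`:
the set of rows `r` with `α r > j`. -/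
def keyCol (α : ℕ →₀ ℕ) (j : ℕ) : Finset ℕ :=
  α.support.filter (fun r => j < α r)

/-- The `k`-th smallest element of a finite set (0 for out of range `k`). -/
def ithSmall (A : Finset ℕ) (k : ℕ) : ℕ := (A.sort (· ≤ ·)).getD k 0

/-- Entrywise comparison of two columns (as sets of equal size). -/
def colLE (A B : Finset ℕ) : Prop :=
  A.card = B.card ∧ ∀ k, ithSmall A k ≤ ithSmall B k

/-- `T ∈ SVT(α)`: `T` is a set-valued tableau of the same shape as `key(α)`
with `K₊(T) ≤ key(α)` entrywise. -/
def InSVTset (α : ℕ →₀ ℕ) (T : List (List (Finset ℕ))) : Prop :=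
  IsSVT T ∧ (∀ j, (T.getD j []).length = (keyCol α j).card) ∧
  ∀ j, colLE (svtKeyCol T j) (keyCol α j)

/-- The weight of a set-valued tableau: the number of occurrences of each letter. -/
noncomputable def svtWt (T : List (List (Finset ℕ))) : ℕ →₀ ℕ :=
  ((svtWord T).map (fun i => Finsupp.single i 1)).sum

/-- The number of cells of a tableau. -/
def numCells (T : List (List (Finset ℕ))) : ℕ := (T.map List.length).sum

/-- The excess `ex(T) = |wt(T)| - #cells`. -/
def svtEx (T : List (List (Finset ℕ))) : ℕ := (svtWord T).length - numCells T

/-- `s_i α`: swap the `i`-th and `(i+1)`-th entries of a weak composition. -/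
def swapComp (i : ℕ) (α : ℕ →₀ ℕ) : ℕ →₀ ℕ :=
  Finsupp.equivMapDomain (Equiv.swap i (i+1)) α

/-- Knuth equivalence of words. -/
inductive Knuth : List ℕ → List ℕ → Prop
  | swap_xzy (u v : List ℕ) (x y z : ℕ) (h1 : x ≤ y) (h2 : y < z) :
      Knuth (u ++ [x, z, y] ++ v) (u ++ [z, x, y] ++ v)
  | swap_yxz (u v : List ℕ) (x y z : ℕ) (h1 : x < y) (h2 : y ≤ z) :
      Knuth (u ++ [y, x, z] ++ v) (u ++ [y, z, x] ++ v)
  | refl (u : List ℕ) : Knuth u u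
  | symm {u v : List ℕ} : Knuth u v → Knuth v u
  | trans {u v w : List ℕ} : Knuth u v → Knuth v w → Knuth u w

/-- A semistandard tableau of antinormal shape (a 180° rotation of a
partition shape), encoded by its columns left to right, each listed top to
bottom; the columns are bottom-aligned and their lengths weakly increase.
Columns strictly increase downwards and rows weakly increase rightwards. -/
def IsAntiFill (A : List (List ℕ)) : Prop :=
  (∀ c ∈ A, c ≠ []) ∧
  (∀ c ∈ A, List.Chain' (· < ·) c) ∧
  List.Chain' (fun c d => c.length ≤ d.length ∧
    ∀ r, r < c.length → c.getD r 0 ≤ d.getD (r + (d.length - c.length)) 0) A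

/-!
Each letter `m` of a word acts on a set by `S ⋆ m`, and the two elementary Knuth moves commute
with this action: `S ⋆ x ⋆ z = S ⋆ z ⋆ x` as soon as some element of `S` lies in `(x, z]`, and
otherwise the letter `x` is absorbed by the larger letter that follows it. Hence `∅ ⋆ w` is a
Knuth invariant of `w`. For an antinormal tableau it is computed column by column: reading a
column `d` bottom to top, i.e. from its largest entry down, starting from the set of the column
`c` to its left, each letter replaces the entry of `c` in the same row, so `c ⋆ reverse d = d`,
and `∅ ⋆ word(A)` is the last column of `A`.
-/

open Finset

local infixl:70 " ⋆ " => starOne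

section StarOne

variable {S X : Finset ℕ} {a b c m x y z : ℕ}

theorem starOne_of_forall_lt (h : ∀ a ∈ S, m < a) : S ⋆ m = insert m S := by
  rw [starOne, dif_neg]
  rintro ⟨a, ha⟩
  rw [mem_filter] at ha
  exact (h a ha.1).not_ge ha.2

theorem starOne_of_greatest (hb : b ∈ S) (hbm : b ≤ m) (hmax : ∀ a ∈ S, a ≤ m → a ≤ b) :
    S ⋆ m = insert m (S.erase b) := by
  have hne : (S.filter (· ≤ m)).Nonempty := ⟨b, mem_filter.2 ⟨hb, hbm⟩⟩
  have hmem := mem_filter.1 (max'_mem _ hne)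
  rw [starOne, dif_pos hne,
    le_antisymm (hmax _ hmem.1 hmem.2) (le_max' _ b (mem_filter.2 ⟨hb, hbm⟩))]

theorem forall_lt_or_exists_greatest_le (S : Finset ℕ) (m : ℕ) :
    (∀ a ∈ S, m < a) ∨ ∃ b ∈ S, b ≤ m ∧ ∀ a ∈ S, a ≤ m → a ≤ b := by
  by_cases h : (S.filter (· ≤ m)).Nonempty
  · obtain ⟨b, hb, hmax⟩ := exists_max_image _ id h
    rw [mem_filter] at hb
    exact .inr ⟨b, hb.1, hb.2, fun a ha ham => hmax a (mem_filter.2 ⟨ha, ham⟩)⟩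
  · exact .inl fun a ha => lt_of_not_ge fun ham => h ⟨a, mem_filter.2 ⟨ha, ham⟩⟩

theorem mem_starOne_self : m ∈ S ⋆ m := by
  rw [starOne]
  split <;> exact mem_insert_self _ _

theorem starOne_subset_insert : S ⋆ m ⊆ insert m S := by
  rw [starOne]
  split
  · exact insert_subset_insert _ (erase_subset _ _)
  · exact Subset.rfl

theorem mem_starOne_of_lt (ha : a ∈ S) (hma : m < a) : a ∈ S ⋆ m := by
  rcases forall_lt_or_exists_greatest_le S m with h | ⟨b, hb, hbm, hmax⟩
  · rw [starOne_of_forall_lt h]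
    exact mem_insert_of_mem ha
  · rw [starOne_of_greatest hb hbm hmax]
    exact mem_insert_of_mem (mem_erase.2 ⟨by omega, ha⟩)

theorem starOne_insert_of_lt (ham : a < m) : insert m X ⋆ a = insert m (X ⋆ a) := by
  rcases forall_lt_or_exists_greatest_le X a with h | ⟨b, hb, hba, hmax⟩
  · have h' : ∀ t ∈ insert m X, a < t := by
      simpa only [mem_insert, forall_eq_or_imp] using ⟨ham, h⟩
    rw [starOne_of_forall_lt h, starOne_of_forall_lt h', insert_comm]
  · have hmax' : ∀ t ∈ insert m X, t ≤ a → t ≤ b := by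
      simpa only [mem_insert, forall_eq_or_imp] using ⟨fun hma => by omega, hmax⟩
    rw [starOne_of_greatest hb hba hmax, starOne_of_greatest (mem_insert_of_mem hb) hba hmax',
      erase_insert_of_ne (by omega), insert_comm]

theorem starOne_erase_of_lt (hmc : m < c) : S.erase c ⋆ m = (S ⋆ m).erase c := by
  rcases forall_lt_or_exists_greatest_le S m with h | ⟨b, hb, hbm, hmax⟩
  · rw [starOne_of_forall_lt h, starOne_of_forall_lt fun a ha => h a (mem_of_mem_erase ha),
      erase_insert_of_ne (by omega)]
  · rw [starOne_of_greatest hb hbm hmax,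
      starOne_of_greatest (mem_erase.2 ⟨by omega, hb⟩) hbm fun a ha => hmax a (mem_of_mem_erase ha),
      erase_insert_of_ne (by omega), erase_right_comm]

/-- Both sides replace the greatest element `c ≤ z` of `S` by `z`; since `x < c`, the letter `x`
acts on the rest of `S` in the same way before and after. -/
theorem starOne_comm_of_mem_Ioc (hxz : x < z) (hg : ∃ g ∈ S, x < g ∧ g ≤ z) :
    S ⋆ x ⋆ z = S ⋆ z ⋆ x := by
  obtain ⟨g, hgS, hxg, hgz⟩ := hg
  obtain ⟨c, hcS, hcz, hcmax⟩ : ∃ c ∈ S, c ≤ z ∧ ∀ a ∈ S, a ≤ z → a ≤ c := by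
    rcases forall_lt_or_exists_greatest_le S z with h | h
    · exact absurd (h g hgS) hgz.not_gt
    · exact h
  have hxc : x < c := hxg.trans_le (hcmax g hgS hgz)
  have hcmax' : ∀ a ∈ S ⋆ x, a ≤ z → a ≤ c := fun a ha haz => by
    rcases mem_insert.1 (starOne_subset_insert ha) with rfl | ha
    · exact hxc.le
    · exact hcmax a ha haz
  calc S ⋆ x ⋆ z = insert z ((S ⋆ x).erase c) :=
        starOne_of_greatest (mem_starOne_of_lt hcS hxc) hcz hcmax'
    _ = insert z (S.erase c ⋆ x) := by rw [starOne_erase_of_lt hxc]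
    _ = insert z (S.erase c) ⋆ x := (starOne_insert_of_lt (hxc.trans_le hcz)).symm
    _ = S ⋆ z ⋆ x := by rw [starOne_of_greatest hcS hcz hcmax]

theorem starOne_starOne_of_le (hxy : x ≤ y) (h : ∀ t ∈ S, t ≤ y → t ≤ x) :
    S ⋆ x ⋆ y = S ⋆ y := by
  obtain ⟨R, hx, hy, hxR, hR⟩ : ∃ R, S ⋆ x = insert x R ∧ S ⋆ y = insert y R ∧ x ∉ R ∧
      ∀ t ∈ R, t ≤ y → t ≤ x := by
    rcases forall_lt_or_exists_greatest_le S x with hS | ⟨b, hb, hbx, hmax⟩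
    · refine ⟨S, starOne_of_forall_lt hS, starOne_of_forall_lt fun t ht => ?_,
        fun hx => (hS x hx).false, h⟩
      exact lt_of_not_ge fun hty => (hS t ht).not_ge (h t ht hty)
    · refine ⟨S.erase b, starOne_of_greatest hb hbx hmax,
        starOne_of_greatest hb (hbx.trans hxy) fun t ht hty => hmax t ht (h t ht hty),
        fun hx => ?_, fun t ht => h t (mem_of_mem_erase ht)⟩
      obtain ⟨hxb, hxS⟩ := mem_erase.1 hx
      exact hxb (le_antisymm (hmax x hxS le_rfl) hbx)
  have hmax : ∀ t ∈ insert x R, t ≤ y → t ≤ x := by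
    simpa only [mem_insert, forall_eq_or_imp] using ⟨fun _ => le_rfl, hR⟩
  rw [hx, hy, starOne_of_greatest (mem_insert_self x R) hxy hmax, erase_insert hxR]

theorem starOne_knuth_xzy (hxy : x ≤ y) (hyz : y < z) :
    S ⋆ x ⋆ z ⋆ y = S ⋆ z ⋆ x ⋆ y := by
  by_cases hg : ∃ g ∈ S, x < g ∧ g ≤ z
  · rw [starOne_comm_of_mem_Ioc (hxy.trans_lt hyz) hg]
  · push Not at hg
    have hS : ∀ t ∈ S, t ≤ z → t ≤ x := fun t ht htz => not_lt.1 fun hxt => (hg t ht hxt).not_ge htz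
    have hSz : ∀ t ∈ S ⋆ z, t ≤ y → t ≤ x := fun t ht hty => by
      rcases mem_insert.1 (starOne_subset_insert ht) with rfl | ht
      · omega
      · exact hS t ht (by omega)
    rw [starOne_starOne_of_le (hxy.trans hyz.le) hS, starOne_starOne_of_le hxy hSz]

theorem starOne_knuth_yxz (hxy : x < y) (hyz : y ≤ z) :
    S ⋆ y ⋆ x ⋆ z = S ⋆ y ⋆ z ⋆ x :=
  starOne_comm_of_mem_Ioc (hxy.trans_le hyz) ⟨y, mem_starOne_self, hxy, hyz⟩

end StarOne

section StarWord

@[simp]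
theorem starWord_nil (S : Finset ℕ) : starWord S [] = S := rfl

@[simp]
theorem starWord_cons (S : Finset ℕ) (a : ℕ) (w : List ℕ) :
    starWord S (a :: w) = starWord (S ⋆ a) w := rfl

@[simp]
theorem starWord_append (S : Finset ℕ) (u v : List ℕ) :
    starWord S (u ++ v) = starWord (starWord S u) v :=
  List.foldl_append

theorem starWord_eq_of_knuth {u v : List ℕ} (h : Knuth u v) (S : Finset ℕ) :
    starWord S u = starWord S v := by
  induction h generalizing S with
  | swap_xzy u v x y z h1 h2 => simp [starOne_knuth_xzy h1 h2]
  | swap_yxz u v x y z h1 h2 => simp [starOne_knuth_yxz h1 h2]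
  | refl u => rfl
  | symm _ ih => exact (ih S).symm
  | trans _ _ ih1 ih2 => exact (ih1 S).trans (ih2 S)

theorem starWord_insert_of_forall_lt {X : Finset ℕ} {m : ℕ} {w : List ℕ} (hw : ∀ a ∈ w, a < m) :
    starWord (insert m X) w = insert m (starWord X w) := by
  induction w generalizing X with
  | nil => rfl
  | cons a w ih =>
    rw [List.forall_mem_cons] at hw
    rw [starWord_cons, starOne_insert_of_lt hw.1, ih hw.2, starWord_cons]

end StarWord

section Antinormal

/-- The relation between adjacent columns in `IsAntiFill`; the index shift is because the columns
are bottom-aligned. -/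
def AntiRel (c d : List ℕ) : Prop :=
  c.length ≤ d.length ∧
    ∀ r, r < c.length → c.getD r 0 ≤ d.getD (r + (d.length - c.length)) 0

theorem antiRel_nil_left (d : List ℕ) : AntiRel [] d := by
  simp [AntiRel]

theorem AntiRel.of_append_singleton {c d : List ℕ} {b m : ℕ}
    (h : AntiRel (c ++ [b]) (d ++ [m])) : b ≤ m ∧ AntiRel c d := by
  obtain ⟨hlen, hrow⟩ := h
  simp only [List.length_append, List.length_singleton, add_le_add_iff_right] at hlen hrow
  have hshift : d.length + 1 - (c.length + 1) = d.length - c.length := by omega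
  simp only [hshift] at hrow
  refine ⟨?_, hlen, fun r hr => ?_⟩
  · have h := hrow c.length (by omega)
    rwa [List.getD_append_right _ _ _ _ le_rfl, show c.length + (d.length - c.length) = d.length
      by omega, List.getD_append_right _ _ _ _ le_rfl, Nat.sub_self, Nat.sub_self] at h
  · have h := hrow r (by omega)
    rwa [List.getD_append _ _ _ _ hr, List.getD_append _ _ _ _ (by omega)] at h

theorem starOne_toFinset_append_singleton {c : List ℕ} {b m : ℕ}
    (hc : (c ++ [b]).IsChain (· < ·)) (hbm : b ≤ m) :
    (c ++ [b]).toFinset ⋆ m = insert m c.toFinset := by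
  have hcb : ∀ t ∈ c, t < b := fun t ht =>
    (List.pairwise_append.1 (List.isChain_iff_pairwise.1 hc)).2.2 t ht b (List.mem_singleton_self b)
  have hbc : b ∉ c := fun h => (hcb b h).false
  have hmax : ∀ t ∈ (c ++ [b]).toFinset, t ≤ m → t ≤ b := fun t ht _ => by
    simp only [List.toFinset_append, mem_union, List.mem_toFinset, List.mem_singleton] at ht
    rcases ht with ht | rfl
    · exact (hcb t ht).le
    · exact le_rfl
  have htoFinset : (c ++ [b]).toFinset = insert b c.toFinset := by
    ext
    simp
  rw [starOne_of_greatest (by simp) hbm hmax, htoFinset, erase_insert (by simpa using hbc)]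

theorem starWord_toFinset_reverse_of_antiRel {c d : List ℕ} (hc : c.IsChain (· < ·))
    (hd : d.IsChain (· < ·)) (h : AntiRel c d) : starWord c.toFinset d.reverse = d.toFinset := by
  induction d using List.reverseRecOn generalizing c with
  | nil =>
    obtain rfl : c = [] := List.eq_nil_of_length_eq_zero (Nat.le_zero.1 h.1)
    rfl
  | append_singleton d m ih =>
    obtain ⟨c', hstep, hc', hrel⟩ : ∃ c', c.toFinset ⋆ m = insert m c'.toFinset ∧
        c'.IsChain (· < ·) ∧ AntiRel c' d := by
      rcases c.eq_nil_or_concat with rfl | ⟨c', b, rfl⟩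
      · exact ⟨[], starOne_of_forall_lt (by simp), .nil, antiRel_nil_left d⟩
      · rw [List.concat_eq_append] at hc h ⊢
        obtain ⟨hbm, hrel⟩ := h.of_append_singleton
        exact ⟨c', starOne_toFinset_append_singleton hc hbm, hc.prefix (List.prefix_append _ _),
          hrel⟩
    have hdm : ∀ a ∈ d.reverse, a < m := fun a ha =>
      (List.pairwise_append.1 (List.isChain_iff_pairwise.1 hd)).2.2 a (List.mem_reverse.1 ha) m
        (List.mem_singleton_self m)
    rw [List.reverse_append, List.reverse_singleton, List.singleton_append, starWord_cons, hstep,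
      starWord_insert_of_forall_lt hdm, ih hc' (hd.prefix (List.prefix_append _ _)) hrel]
    ext
    simp

theorem starWord_fillWord_of_isChain_antiRel {c : List ℕ} {A : List (List ℕ)}
    (hc : c.IsChain (· < ·)) (hcols : ∀ d ∈ A, d.IsChain (· < ·)) (hA : (c :: A).IsChain AntiRel) :
    starWord c.toFinset (fillWord A) = (A.getLastD c).toFinset := by
  induction A generalizing c with
  | nil => rfl
  | cons d A ih =>
    rw [List.isChain_cons_cons] at hA
    have hd := hcols d List.mem_cons_self
    rw [show fillWord (d :: A) = d.reverse ++ fillWord A from rfl, starWord_append,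
      starWord_toFinset_reverse_of_antiRel hc hd hA.1,
      ih hd (fun e he => hcols e (List.mem_cons_of_mem d he)) hA.2]
    cases A <;> rfl

theorem starWord_empty_fillWord_of_isAntiFill {A : List (List ℕ)} (hA : IsAntiFill A) :
    starWord ∅ (fillWord A) = (A.getLastD []).toFinset := by
  obtain ⟨-, hcols, hchain⟩ := hA
  refine starWord_fillWord_of_isChain_antiRel (c := []) .nil hcols ?_
  cases A with
  | nil => exact .singleton []
  | cons d A => exact .cons_cons (antiRel_nil_left d) hchain

end Antinormal

theorem rightKey_col_eq_star_general (T : List (List ℕ)) (j : ℕ)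
    (A : List (List ℕ)) (hA : IsAntiFill A)
    (hknuth : Knuth (fillWord A) (fillWord (T.drop j))) :
    (A.getLastD []).toFinset = starWord ∅ (fillWord (T.drop j)) := by
  rw [← starWord_empty_fillWord_of_isAntiFill hA, starWord_eq_of_knuth hknuth]

/-- **Lemma (star computes the right key).** Let `T` be an SSYT of partition
shape.  For every column index `j` (0-indexed), the set of entries of column
`j` of the right key `K₊(T)` — i.e. the rightmost column of the unique
antinormal SSYT whose column word is Knuth equivalent to that of `T_{≥j}` —
equals `∅ ⋆ word(T_{≥j})`. -/
theorem rightKey_col_eq_star (T : List (List ℕ)) (hT : IsSSYTFill T) (j : ℕ)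
    (A : List (List ℕ)) (hA : IsAntiFill A)
    (hknuth : Knuth (fillWord A) (fillWord (T.drop j))) :
    (A.getLastD []).toFinset = starWord ∅ (fillWord (T.drop j)) :=
  rightKey_col_eq_star_general T j A hA hknuth
end

section
/- Let T be a set-valued tableau of partition shape. For every j ≥ 1, the set of entries of column j of T_max equals ∅ ⋆ word(T_{≥j}), where T_{≥j} is T with its first j−1 columns removed. Equivalently, max_{P ∈ S(T)} (∅ ⋆ word(P)) = ∅ ⋆ word(T) column by column, where max is the entrywise maximum of sets of equal size (the set whose i-th smallest element is the maximum over the i-th smallest elements). -/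
/-!
The number of entries `≥ v` of `∅ ⋆ w` is the greatest length of a strictly decreasing
subsequence of `w` all of whose terms are `≥ v`, and comparing the `k`-th smallest entries of
two columns of equal size amounts to comparing these counts for every `v`. The word of any
`P ∈ S(T)` is a subsequence of `word(T)`, which gives the upper bound. Conversely, a strictly
decreasing subsequence of `word(T)` uses at most one letter of each cell, so it is a
subsequence of the word of some `P ∈ S(T)`, which gives attainment. Finally both sides have as
many entries as the first column: in the column word of an SSYT a strictly decreasing
subsequence meets each row at most once.
-/

open Finset
open scoped List

def countGE (A : Finset ℕ) (v : ℕ) : ℕ := #{x ∈ A | v ≤ x}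

lemma countGE_zero (A : Finset ℕ) : countGE A 0 = A.card := by
  simp [countGE]

lemma le_ithSmall_iff {A : Finset ℕ} {k : ℕ} (hk : k < A.card) (v : ℕ) :
    v ≤ ithSmall A k ↔ A.card - k ≤ countGE A v := by
  set e := A.orderEmbOfFin rfl
  have hith : ithSmall A k = e ⟨k, hk⟩ := by
    rw [orderEmbOfFin_apply, ithSmall, List.getD_eq_getElem _ _ (by rwa [length_sort])]
    rfl
  have hcount : countGE A v = #{i | v ≤ e i} := by
    conv_lhs => rw [← A.map_orderEmbOfFin_univ rfl]
    rw [countGE, filter_map, card_map]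
    rfl
  rw [hith, hcount]
  constructor
  · intro h
    calc A.card - k = #(Ici (⟨k, hk⟩ : Fin A.card)) := by rw [Fin.card_Ici]
      _ ≤ #{i | v ≤ e i} := card_le_card fun i hi =>
          mem_filter.2 ⟨mem_univ _, h.trans (e.monotone (mem_Ici.1 hi))⟩
  · contrapose!
    intro h
    calc #{i | v ≤ e i} ≤ #(Ioi (⟨k, hk⟩ : Fin A.card)) := card_le_card fun i hi =>
          mem_Ioi.2 (e.lt_iff_lt.1 (h.trans_le (mem_filter.1 hi).2))
      _ < A.card - k := by rw [Fin.card_Ioi]; dsimp only; omega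

lemma ithSmall_eq_zero {A : Finset ℕ} {k : ℕ} (hk : A.card ≤ k) : ithSmall A k = 0 :=
  List.getD_eq_default _ _ (by rwa [length_sort])

lemma ithSmall_le_ithSmall {A B : Finset ℕ} (hcard : A.card = B.card) {k : ℕ}
    (h : countGE A (ithSmall A k) ≤ countGE B (ithSmall A k)) :
    ithSmall A k ≤ ithSmall B k := by
  rcases lt_or_ge k A.card with hk | hk
  · rw [le_ithSmall_iff (hcard ▸ hk), ← hcard]
    exact ((le_ithSmall_iff hk _).1 le_rfl).trans h
  · rw [ithSmall_eq_zero hk]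
    exact Nat.zero_le _

lemma countGE_eq_countGE_succ {A : Finset ℕ} {m v : ℕ} (hv : v ≤ m)
    (h : ∀ x ∈ A, x ≤ m → x < v) : countGE A v = countGE A (m + 1) := by
  unfold countGE
  congr 1
  ext x
  simp only [mem_filter, and_congr_right_iff]
  intro hx
  have := h x hx
  omega

lemma countGE_starOne (A : Finset ℕ) (m v : ℕ) :
    countGE (starOne A m) v =
      if v ≤ m then max (countGE A v) (countGE A (m + 1) + 1) else countGE A v := by
  unfold starOne
  split_ifs with hne hv hv
  · obtain ⟨hbA, hbm⟩ := mem_filter.1 (max'_mem _ hne)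
    have hbmax : ∀ y ∈ A, y ≤ m → y ≤ max' _ hne := fun y hy hym =>
      le_max' _ y (mem_filter.2 ⟨hy, hym⟩)
    set b := max' _ hne
    by_cases hvb : v ≤ b
    · have hbF : b ∈ {x ∈ A | v ≤ x} := mem_filter.2 ⟨hbA, hvb⟩
      have hlt : countGE A (m + 1) < countGE A v :=
        card_lt_card ((ssubset_iff_of_subset (monotone_filter_right A fun x hx => by omega)).2
          ⟨b, hbF, by simp; omega⟩)
      have hcard : countGE (insert m (A.erase b)) v = countGE A v := by
        unfold countGE
        rw [filter_insert, if_pos hv, filter_erase]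
        by_cases hmA : m ∈ A
        · rw [le_antisymm hbm (hbmax m hmA le_rfl), insert_erase (mem_filter.2 ⟨hmA, hv⟩)]
        · rw [card_insert_of_notMem (by simp [hmA]), card_erase_of_mem hbF]
          have := card_pos.2 ⟨b, hbF⟩
          omega
      omega
    · have hgap := countGE_eq_countGE_succ hv fun x hx hxm =>
        (hbmax x hx hxm).trans_lt (not_le.1 hvb)
      have hmA : m ∉ A := fun hmA => hvb (hv.trans (hbmax m hmA le_rfl))
      have hcard : countGE (insert m (A.erase b)) v = countGE A v + 1 := by
        unfold countGE
        rw [filter_insert, if_pos hv, filter_erase, erase_eq_of_notMem (by simp [hvb]),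
          card_insert_of_notMem (by simp [hmA])]
      omega
  · obtain ⟨hbA, hbm⟩ := mem_filter.1 (max'_mem _ hne)
    unfold countGE
    rw [filter_insert, if_neg hv, filter_erase, erase_eq_of_notMem (by simp; omega)]
  · have hA : ∀ x ∈ A, m < x := fun x hx =>
      not_le.1 fun hxm => hne ⟨x, mem_filter.2 ⟨hx, hxm⟩⟩
    have hgap := countGE_eq_countGE_succ hv fun x hx hxm => absurd (hA x hx) (not_lt.2 hxm)
    have hmA : m ∉ A := fun h => (hA m h).false
    have hcard : countGE (insert m A) v = countGE A v + 1 := by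
      unfold countGE
      rw [filter_insert, if_pos hv, card_insert_of_notMem (by simp [hmA])]
    omega
  · unfold countGE
    rw [filter_insert, if_neg hv]

lemma starWord_concat (S : Finset ℕ) (w : List ℕ) (m : ℕ) :
    starWord S (w ++ [m]) = starOne (starWord S w) m := by
  simp [starWord]

def decSubseqLengths (w : List ℕ) (v : ℕ) : Set ℕ :=
  {n | ∃ l : List ℕ, l <+ w ∧ l.Pairwise (· > ·) ∧ (∀ x ∈ l, v ≤ x) ∧
    l.length = n}

lemma decSubseqLengths_nil (v : ℕ) : decSubseqLengths [] v = {0} := by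
  ext n
  simp [decSubseqLengths]

lemma decSubseqLengths_concat (w : List ℕ) (m v : ℕ) :
    decSubseqLengths (w ++ [m]) v = decSubseqLengths w v ∪
      if v ≤ m then (· + 1) '' decSubseqLengths w (m + 1) else ∅ := by
  ext n
  constructor
  · rintro ⟨l, hl, hdec, hv, rfl⟩
    obtain ⟨l₁, l₂, rfl, hl₁, hl₂⟩ := List.sublist_append_iff.1 hl
    rw [List.pairwise_append] at hdec
    rcases List.sublist_singleton.1 hl₂ with rfl | rfl
    · exact Or.inl ⟨l₁, hl₁, hdec.1, fun x hx => hv x (by simp [hx]), by simp⟩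
    · have hvm : v ≤ m := hv m (by simp)
      refine Or.inr ?_
      rw [if_pos hvm]
      exact ⟨l₁.length, ⟨l₁, hl₁, hdec.1, fun x hx => hdec.2.2 x hx m (by simp), rfl⟩,
        by simp⟩
  · rintro (⟨l, hl, hdec, hv, rfl⟩ | hn)
    · exact ⟨l, hl.trans (List.sublist_append_left w [m]), hdec, hv, rfl⟩
    · split_ifs at hn with hvm
      · obtain ⟨_, ⟨l, hl, hdec, hgt, rfl⟩, rfl⟩ := hn
        refine ⟨l ++ [m], hl.append (List.Sublist.refl [m]), ?_, ?_, by simp⟩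
        · rw [List.pairwise_append]
          exact ⟨hdec, List.pairwise_singleton _ _, fun x hx y hy => by
            rw [List.mem_singleton.1 hy]; exact hgt x hx⟩
        · simp only [List.mem_append, List.mem_singleton]
          rintro x (hx | rfl)
          · have := hgt x hx; omega
          · exact hvm
      · exact absurd hn (Set.notMem_empty n)

theorem isGreatest_decSubseqLengths (w : List ℕ) (v : ℕ) :
    IsGreatest (decSubseqLengths w v) (countGE (starWord ∅ w) v) := by
  induction w using List.reverseRecOn generalizing v with
  | nil => simp [decSubseqLengths_nil, starWord, countGE, isGreatest_singleton]
  | append_singleton w m ih =>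
    rw [starWord_concat, countGE_starOne, decSubseqLengths_concat]
    split_ifs
    · exact (ih v).union ((add_left_mono).map_isGreatest (ih (m + 1)))
    · simpa using ih v

lemma countGE_starWord_le_of_sublist {w w' : List ℕ} (h : w <+ w') (v : ℕ) :
    countGE (starWord ∅ w) v ≤ countGE (starWord ∅ w') v := by
  obtain ⟨l, hl, hdec, hv, hlen⟩ := (isGreatest_decSubseqLengths w v).1
  exact (isGreatest_decSubseqLengths w' v).2 ⟨l, hl.trans h, hdec, hv, hlen⟩

@[simp] lemma fillWord_cons (c : List ℕ) (P : List (List ℕ)) :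
    fillWord (c :: P) = c.reverse ++ fillWord P := by
  simp [fillWord]

@[simp] lemma svtWord_cons (c : List (Finset ℕ)) (T : List (List (Finset ℕ))) :
    svtWord (c :: T) = (c.reverse.map cellWord).flatten ++ svtWord T := by
  simp [svtWord]

lemma sublist_flatten_cellWord_of_forall₂ {p : List ℕ} {cs : List (Finset ℕ)}
    (h : List.Forall₂ (· ∈ ·) p cs) : p <+ (cs.map cellWord).flatten := by
  induction h with
  | nil => simp
  | cons hx _ ih =>
    exact (List.singleton_sublist.2 (by simpa [cellWord] using hx)).append ih

lemma IsChoice.fillWord_sublist {P : List (List ℕ)} {T : List (List (Finset ℕ))}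
    (h : IsChoice P T) : fillWord P <+ svtWord T := by
  induction h with
  | nil => simp [fillWord, svtWord]
  | cons hc _ ih =>
    simpa using (sublist_flatten_cellWord_of_forall₂ (List.forall₂_reverse_iff.2 hc)).append ih

lemma eq_nil_or_singleton_of_sublist_cellWord {l : List ℕ} {S : Finset ℕ}
    (hl : l <+ cellWord S) (hdec : l.Pairwise (· > ·)) : l = [] ∨ ∃ x ∈ S, l = [x] := by
  match l, hl, hdec with
  | [], _, _ => exact Or.inl rfl
  | [x], hl, _ => exact Or.inr ⟨x, by simpa [cellWord] using hl, rfl⟩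
  | x :: y :: _, hl, hdec =>
    have hinc := (S.sortedLT_sort.pairwise.sublist hl).rel_head_tail (List.mem_cons_self ..)
    have hdec' := hdec.rel_head_tail (List.mem_cons_self ..)
    exact absurd hinc (not_lt.2 hdec'.le)

lemma exists_forall₂_mem_sublist {cs : List (Finset ℕ)} (hne : ∀ S ∈ cs, S.Nonempty)
    {l : List ℕ} (hl : l <+ (cs.map cellWord).flatten) (hdec : l.Pairwise (· > ·)) :
    ∃ p, List.Forall₂ (· ∈ ·) p cs ∧ l <+ p := by
  induction cs generalizing l with
  | nil => exact ⟨[], .nil, by simpa using hl⟩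
  | cons S cs ih =>
    rw [List.map_cons, List.flatten_cons, List.sublist_append_iff] at hl
    obtain ⟨l₁, l₂, rfl, hl₁, hl₂⟩ := hl
    rw [List.pairwise_append] at hdec
    obtain ⟨p, hp, hl₂p⟩ := ih (fun S' hS' => hne S' (by simp [hS'])) hl₂ hdec.2.1
    rcases eq_nil_or_singleton_of_sublist_cellWord hl₁ hdec.1 with rfl | ⟨x, hx, rfl⟩
    · obtain ⟨y, hy⟩ := hne S (by simp)
      exact ⟨y :: p, .cons hy hp, hl₂p.trans (List.sublist_cons_self y p)⟩
    · exact ⟨x :: p, .cons hx hp, hl₂p.cons_cons x⟩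

lemma exists_isChoice_sublist_fillWord {T : List (List (Finset ℕ))}
    (hne : ∀ c ∈ T, ∀ S ∈ c, S.Nonempty) {l : List ℕ} (hl : l <+ svtWord T)
    (hdec : l.Pairwise (· > ·)) : ∃ P, IsChoice P T ∧ l <+ fillWord P := by
  induction T generalizing l with
  | nil => exact ⟨[], .nil, by simpa [svtWord, fillWord] using hl⟩
  | cons c T ih =>
    rw [svtWord_cons, List.sublist_append_iff] at hl
    obtain ⟨l₁, l₂, rfl, hl₁, hl₂⟩ := hl
    rw [List.pairwise_append] at hdec
    obtain ⟨p, hp, hl₁p⟩ := exists_forall₂_mem_sublist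
      (fun S hS => hne c (by simp) S (List.mem_reverse.1 hS)) hl₁ hdec.1
    obtain ⟨P, hP, hl₂P⟩ := ih (fun c' hc' => hne c' (by simp [hc'])) hl₂ hdec.2.1
    refine ⟨p.reverse :: P, .cons ?_ hP, by simpa using hl₁p.append hl₂P⟩
    simpa using List.forall₂_reverse_iff.2 hp

lemma exists_isChoice {T : List (List (Finset ℕ))} (hne : ∀ c ∈ T, ∀ S ∈ c, S.Nonempty) :
    ∃ P, IsChoice P T :=
  (exists_isChoice_sublist_fillWord hne (List.nil_sublist _) List.Pairwise.nil).imp fun _ h => h.1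

lemma IsChoice.drop {P : List (List ℕ)} {T : List (List (Finset ℕ))} (h : IsChoice P T)
    (j : ℕ) : IsChoice (P.drop j) (T.drop j) :=
  List.forall₂_drop j h

lemma IsChoice.length_headD {P : List (List ℕ)} {T : List (List (Finset ℕ))}
    (h : IsChoice P T) : (P.headD []).length = (T.headD []).length := by
  cases h with
  | nil => rfl
  | cons hc _ => exact hc.length_eq

lemma exists_isChoice_drop_eq {T : List (List (Finset ℕ))}
    (hne : ∀ c ∈ T, ∀ S ∈ c, S.Nonempty) {j : ℕ} {Q : List (List ℕ)}
    (hQ : IsChoice Q (T.drop j)) : ∃ P, IsChoice P T ∧ P.drop j = Q := by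
  obtain ⟨P₀, hP₀⟩ := exists_isChoice fun c hc => hne c (List.take_subset j T hc)
  refine ⟨P₀ ++ Q, by simpa [IsChoice] using List.rel_append hP₀ hQ, ?_⟩
  have h₀ := hP₀.length_eq
  have hQlen := hQ.length_eq
  simp only [List.length_take, List.length_drop] at h₀ hQlen
  rw [List.drop_append, List.drop_eq_nil_of_le (by omega), List.nil_append]
  rcases le_total j T.length with h | h
  · rw [show j - P₀.length = 0 by omega, List.drop_zero]
  · rw [List.length_eq_zero_iff.1 (by omega : Q.length = 0), List.drop_nil]

lemma IsSSYTFill.drop {P : List (List ℕ)} (hP : IsSSYTFill P) (j : ℕ) :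
    IsSSYTFill (P.drop j) :=
  ⟨fun c hc => hP.1 c (List.drop_subset j P hc), hP.2.drop j⟩

lemma countP_le_countP_of_forall₂ {α β : Type*} {R : α → β → Prop} {p : α → Bool}
    {q : β → Bool} {l₁ : List α} {l₂ : List β} (h : List.Forall₂ R l₁ l₂)
    (hpq : ∀ a b, R a b → p a → q b) : l₁.countP p ≤ l₂.countP q := by
  induction h with
  | nil => simp
  | @cons a b _ _ hab _ ih =>
    simp only [List.countP_cons]
    have := hpq a b hab
    split_ifs <;> simp_all
    omega

lemma countP_lt_le_of_le_getD {c d : List ℕ} (hlen : d.length ≤ c.length)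
    (hrow : ∀ r, r < d.length → c.getD r 0 ≤ d.getD r 0) (a : ℕ) :
    d.countP (· < a) ≤ c.countP (· < a) := by
  have hd : List.Forall₂ (fun y x => x ≤ y) d (c.take d.length) := by
    refine List.forall₂_iff_get.2 ⟨by simp; omega, fun r h₁ h₂ => ?_⟩
    have := hrow r h₁
    rw [List.getD_eq_getElem _ _ (by omega), List.getD_eq_getElem _ _ h₁] at this
    simpa using this
  calc d.countP (· < a) ≤ (c.take d.length).countP (· < a) :=
        countP_le_countP_of_forall₂ hd fun y x hxy hy => by simp at hy ⊢; omega
    _ ≤ c.countP (· < a) := (List.take_sublist _ _).countP_le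

lemma IsSSYTFill.length_le_countP_lt {P : List (List ℕ)} (hP : IsSSYTFill P) {l : List ℕ}
    (hl : l <+ fillWord P) (hdec : l.Pairwise (· > ·)) {a : ℕ} (ha : ∀ x ∈ l, x < a) :
    l.length ≤ (P.headD []).countP (· < a) := by
  induction P generalizing l a with
  | nil => simp_all [fillWord]
  | cons c P ih =>
    have hP' : IsSSYTFill P := ⟨fun d hd => hP.1 d (List.mem_cons_of_mem c hd), hP.2.tail⟩
    have htransfer : ∀ b, (P.headD []).countP (· < b) ≤ c.countP (· < b) := by
      cases P with
      | nil => simp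
      | cons d P =>
        obtain ⟨hlen, hrow⟩ := (List.isChain_cons_cons.1 hP.2).1
        exact countP_lt_le_of_le_getD hlen hrow
    rw [fillWord_cons, List.sublist_append_iff] at hl
    obtain ⟨l₁, l₂, rfl, hl₁, hl₂⟩ := hl
    rw [List.pairwise_append] at hdec
    simp only [List.headD_cons]
    rcases List.eq_nil_or_concat' l₁ with rfl | ⟨L, b, rfl⟩
    · simpa using (ih hP' hl₂ hdec.2.1 (by simpa using ha)).trans (htransfer a)
    · have hba : b < a := ha b (by simp)
      have h₂ : l₂.length ≤ c.countP (· < b) :=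
        (ih hP' hl₂ hdec.2.1 fun y hy => hdec.2.2 b (by simp) y hy).trans (htransfer b)
      have hL : ∀ x ∈ L ++ [b], b ≤ x ∧ x < a := by
        have := (List.pairwise_append.1 hdec.1).2.2
        simp only [List.mem_append, List.mem_singleton]
        rintro x (hx | rfl)
        · exact ⟨(this x hx b (by simp)).le, ha x (by simp [hx])⟩
        · exact ⟨le_rfl, hba⟩
      have h₁ : (L ++ [b]).length ≤ c.countP (fun x => b ≤ x ∧ x < a) := by
        calc (L ++ [b]).length = (L ++ [b]).countP (fun x => b ≤ x ∧ x < a) :=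
              (List.countP_eq_length.2 (by simpa using hL)).symm
          _ ≤ c.reverse.countP (fun x => b ≤ x ∧ x < a) := hl₁.countP_le
          _ = c.countP (fun x => b ≤ x ∧ x < a) := List.countP_reverse
      have hsplit :
          c.countP (· < b) + c.countP (fun x => b ≤ x ∧ x < a) = c.countP (· < a) := by
        rw [List.countP_eq_countP_filter_add c (· < a) (· < b), List.countP_filter,
          List.countP_filter]
        congr 1 <;> refine List.countP_congr fun x _ => ?_ <;> simp <;> omega
      rw [List.length_append]
      omega

lemma card_starWord_fillWord {P : List (List ℕ)} (hP : IsSSYTFill P) :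
    (starWord ∅ (fillWord P)).card = (P.headD []).length := by
  rw [← countGE_zero]
  apply le_antisymm
  · obtain ⟨l, hl, hdec, -, hlen⟩ := (isGreatest_decSubseqLengths (fillWord P) 0).1
    rw [← hlen]
    exact (hP.length_le_countP_lt hl hdec fun x hx => Nat.lt_succ_of_le
      (List.le_sum_of_mem hx)).trans List.countP_le_length
  · refine (isGreatest_decSubseqLengths _ 0).2
      ⟨(P.headD []).reverse, ?_, ?_, fun _ _ => Nat.zero_le _, List.length_reverse⟩
    · cases P <;> simp
    · cases P with
      | nil => simp
      | cons c P =>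
        simpa [List.pairwise_reverse] using List.isChain_iff_pairwise.1 (hP.1 c (by simp))

lemma exists_isChoice_countGE_starWord_eq {T : List (List (Finset ℕ))}
    (hne : ∀ c ∈ T, ∀ S ∈ c, S.Nonempty) (v : ℕ) :
    ∃ P, IsChoice P T ∧
      countGE (starWord ∅ (fillWord P)) v = countGE (starWord ∅ (svtWord T)) v := by
  obtain ⟨l, hl, hdec, hv, hlen⟩ := (isGreatest_decSubseqLengths (svtWord T) v).1
  obtain ⟨P, hP, hlP⟩ := exists_isChoice_sublist_fillWord hne hl hdec
  exact ⟨P, hP, le_antisymm (countGE_starWord_le_of_sublist hP.fillWord_sublist v)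
    ((isGreatest_decSubseqLengths _ v).2 ⟨l, hlP, hdec, hv, hlen⟩)⟩

lemma IsSVT.card_starWord_svtWord {T : List (List (Finset ℕ))} (hT : IsSVT T) :
    (starWord ∅ (svtWord T)).card = (T.headD []).length := by
  obtain ⟨P, hP, hPT⟩ := exists_isChoice_countGE_starWord_eq hT.1 0
  rw [← countGE_zero, ← hPT, countGE_zero, card_starWord_fillWord (hT.2 P hP), hP.length_headD]

lemma IsSVT.drop {T : List (List (Finset ℕ))} (hT : IsSVT T) (j : ℕ) : IsSVT (T.drop j) := by
  refine ⟨fun c hc => hT.1 c (List.drop_subset j T hc), fun Q hQ => ?_⟩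
  obtain ⟨P, hP, rfl⟩ := exists_isChoice_drop_eq hT.1 hQ
  exact (hT.2 P hP).drop j

/-- **Lemma (computation of `T_max`).** Let `T` be a set-valued tableau of
partition shape.  For every column index `j` (0-indexed), the column
`∅ ⋆ word(T_{≥j})` (which is `svtKeyCol T j`) is the entrywise maximum, over
all choices `P ∈ S(T)`, of column `j` of `K₊(P) = ∅ ⋆ word(P_{≥j})`:
each such column is entrywise at most `∅ ⋆ word(T_{≥j})`, and each entry of
`∅ ⋆ word(T_{≥j})` is achieved by some choice `P`. -/
theorem tmax_col_eq_star (T : List (List (Finset ℕ))) (hT : IsSVT T) (j : ℕ) :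
    (∀ P, IsChoice P T →
      (starWord ∅ (fillWord (P.drop j))).card = (svtKeyCol T j).card ∧
      ∀ k, ithSmall (starWord ∅ (fillWord (P.drop j))) k ≤ ithSmall (svtKeyCol T j) k) ∧
    (∀ k, ∃ P, IsChoice P T ∧
      ithSmall (starWord ∅ (fillWord (P.drop j))) k = ithSmall (svtKeyCol T j) k) := by
  have hT' := hT.drop j
  have hcard : ∀ P, IsChoice P T →
      (starWord ∅ (fillWord (P.drop j))).card = (svtKeyCol T j).card := fun P hP => by
    rw [card_starWord_fillWord (hT'.2 _ (hP.drop j)), svtKeyCol, hT'.card_starWord_svtWord,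
      (hP.drop j).length_headD]
  refine ⟨fun P hP => ⟨hcard P hP, fun k => ithSmall_le_ithSmall (hcard P hP)
    (countGE_starWord_le_of_sublist (hP.drop j).fillWord_sublist _)⟩, fun k => ?_⟩
  obtain ⟨Q, hQ, hQT⟩ := exists_isChoice_countGE_starWord_eq hT'.1 (ithSmall (svtKeyCol T j) k)
  obtain ⟨P, hP, rfl⟩ := exists_isChoice_drop_eq hT.1 hQ
  exact ⟨P, hP, le_antisymm
    (ithSmall_le_ithSmall (hcard P hP) (countGE_starWord_le_of_sublist hQ.fillWord_sublist _))
    (ithSmall_le_ithSmall (hcard P hP).symm hQT.ge)⟩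
end

section
/- Let B be a seminormal abstract Kashiwara GL_n-crystal and let X_0, …, X_k be an i-string in B. Then π_i(x^{wt(X_0)}) = Σ_{j=0}^{k} x^{wt(X_j)}. -/
/-!
Seminormality turns `e_i (X 0) = 0` and the length of the string into `ε_i (X 0) = 0` and
`φ_i (X 0) = k`, so K2 gives `k = wt (X 0)_i - wt (X 0)_{i+1}`. By K1 every step of the string
lowers the weight by `α = v_i - v_{i+1}`, so `wt (X j) = wt (X 0) - j α`. Multiplying the sum by
`x_i - x_{i+1}` then telescopes to `x_i x^{wt (X 0)} - x_{i+1} x^{wt (X 0) - k α}`, and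
`wt (X 0) - k α` is exactly the reflection `s_i (wt (X 0))`.
-/

/-- Iterates of a partially defined operator (`none`, which encodes `𝟎`,
propagates). -/
def iterO {B : Type*} (g : B → Option B) : ℕ → B → Option B
  | 0, x => some x
  | k+1, x => (g x).bind (iterO g k)

/-- The monomial `x^v` in the group algebra `ℤ[x_1^{±1}, x_2^{±1}, …]`,
whose exponents are integer vectors. -/
noncomputable def monom (v : ℕ → ℤ) : AddMonoidAlgebra ℤ (ℕ → ℤ) :=
  AddMonoidAlgebra.single v 1

section iterO

variable {B : Type*} {g : B → Option B}

lemma iterO_succ_eq_bind (j : ℕ) (x : B) : iterO g (j + 1) x = (iterO g j x).bind g := by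
  induction j generalizing x with
  | zero => simp [iterO]
  | succ j ih =>
    rw [iterO]
    cases h : g x with
    | none => simp [iterO, h]
    | some y => simpa [iterO, h] using ih y

lemma iterO_eq_some_of_chain {X : ℕ → B} {k : ℕ} (hX : ∀ j < k, g (X j) = some (X (j + 1))) :
    ∀ j ≤ k, iterO g j (X 0) = some (X j)
  | 0, _ => rfl
  | j + 1, hj => by
    rw [iterO_succ_eq_bind, iterO_eq_some_of_chain hX j (by omega), Option.bind_some,
      hX j (by omega)]

lemma eq_of_iterO_eq_some_of_eq_none {x y : B} {L : ℤ} {m : ℕ}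
    (hL : ∀ m : ℕ, iterO g m x ≠ none ↔ (m : ℤ) ≤ L)
    (hm : iterO g m x = some y) (hy : g y = none) : L = m := by
  have hle : (m : ℤ) ≤ L := (hL m).1 (by simp [hm])
  have hlt : ¬ ((m + 1 : ℕ) : ℤ) ≤ L := fun h =>
    (hL (m + 1)).2 h (by rw [iterO_succ_eq_bind, hm, Option.bind_some, hy])
  push_cast at hlt
  omega

end iterO

lemma eq_add_nsmul_of_succ_eq_add {G : Type*} [AddMonoid G] {w : ℕ → G} {a : G} {k : ℕ}
    (hw : ∀ j < k, w (j + 1) = w j + a) : ∀ j ≤ k, w j = w 0 + j • a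
  | 0, _ => by simp
  | j + 1, hj => by
    rw [hw j (by omega), eq_add_nsmul_of_succ_eq_add hw j (by omega), succ_nsmul, add_assoc]

lemma comp_swap_eq_add_zsmul (v : ℕ → ℤ) (i : ℕ) :
    v ∘ Equiv.swap i (i + 1) = v + (v i - v (i + 1)) • (Pi.single (i + 1) 1 - Pi.single i 1) := by
  funext m
  rcases eq_or_ne m i with rfl | hmi
  · simp
  rcases eq_or_ne m (i + 1) with rfl | hmi'
  · simp
  simp [Equiv.swap_apply_of_ne_of_ne hmi hmi', hmi, hmi']

lemma monom_add (a b : ℕ → ℤ) : monom (a + b) = monom a * monom b := by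
  simp [monom, AddMonoidAlgebra.single_mul_single]

lemma monom_sub_mul_sum_range (a b w : ℕ → ℤ) (N : ℕ) :
    (monom a - monom b) * ∑ j ∈ Finset.range N, monom (w + j • (b - a)) =
      monom (w + a) - monom (w + a + N • (b - a)) := by
  have hterm : ∀ j : ℕ, (monom a - monom b) * monom (w + j • (b - a)) =
      monom (w + a + j • (b - a)) - monom (w + a + (j + 1) • (b - a)) := by
    intro j
    rw [sub_mul, mul_comm, ← monom_add, mul_comm, ← monom_add, succ_nsmul]
    congr 2 <;> abel
  simp only [Finset.mul_sum, hterm]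
  rw [Finset.sum_range_sub', zero_nsmul, add_zero]

theorem iString_sum_general (n : ℕ) (B : Type*)
    (e f : ℕ → B → Option B) (eps phi : ℕ → B → ℤ) (wt : B → ℕ → ℤ)
    (hK1 : ∀ i X Y, i + 1 < n → (e i X = some Y ↔ f i Y = some X))
    (hK1' : ∀ i X Y, i + 1 < n → e i X = some Y →
      eps i Y = eps i X - 1 ∧ phi i Y = phi i X + 1 ∧
      wt Y = fun j => wt X j + (if j = i then 1 else 0) - (if j = i + 1 then 1 else 0))
    (hK2 : ∀ i X, i + 1 < n → phi i X = (wt X i - wt X (i+1)) + eps i X)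
    (hseminormal_e : ∀ i X, i + 1 < n → ∀ k : ℕ,
      (iterO (e i) k X ≠ none ↔ (k : ℤ) ≤ eps i X))
    (hseminormal_f : ∀ i X, i + 1 < n → ∀ k : ℕ,
      (iterO (f i) k X ≠ none ↔ (k : ℤ) ≤ phi i X))
    (i : ℕ) (hi : i + 1 < n) (k : ℕ) (X : ℕ → B)
    (h0 : e i (X 0) = none) (hk : f i (X k) = none)
    (hstep : ∀ j, j < k → f i (X j) = some (X (j+1))) :
    (monom (Pi.single i 1) - monom (Pi.single (i+1) 1)) *
        (∑ j ∈ Finset.range (k+1), monom (wt (X j))) =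
      monom (wt (X 0) + Pi.single i 1) -
        monom (wt (X 0) ∘ (Equiv.swap i (i+1)) + Pi.single (i+1) 1) := by
  set α : ℕ → ℤ := Pi.single (i + 1) 1 - Pi.single i 1
  have hwt_step : ∀ j < k, wt (X (j + 1)) = wt (X j) + α := by
    intro j hj
    have he := (hK1 i _ _ hi).2 (hstep j hj)
    rw [(hK1' i _ _ hi he).2.2]
    funext m
    simp only [α, Pi.add_apply, Pi.sub_apply, Pi.single_apply]
    split_ifs <;> omega
  have hwt := eq_add_nsmul_of_succ_eq_add (w := fun j => wt (X j)) hwt_step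
  have heps : eps i (X 0) = 0 :=
    eq_of_iterO_eq_some_of_eq_none (hseminormal_e i _ hi) (m := 0) rfl h0
  have hphi : phi i (X 0) = k := eq_of_iterO_eq_some_of_eq_none (hseminormal_f i _ hi)
    (iterO_eq_some_of_chain hstep k le_rfl) hk
  have hlen : wt (X 0) i - wt (X 0) (i + 1) = k := by linarith [hK2 i (X 0) hi]
  rw [Finset.sum_congr rfl fun j hj => by rw [hwt j (Finset.mem_range_succ_iff.1 hj)],
    monom_sub_mul_sum_range, comp_swap_eq_add_zsmul, hlen, natCast_zsmul, succ_nsmul]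
  congr 2
  abel

/-- **Lemma (sum over an `i`-string).** Let `B` be a seminormal abstract
Kashiwara `GL_n`-crystal (with operators `e_i, f_i`, string lengths
`ε_i, φ_i`, and weight `wt`, satisfying axioms K1 and K2 and seminormality),
and let `X 0, …, X k` be an `i`-string in `B`.  Then
`π_i (x^{wt(X 0)}) = ∑_{j=0}^{k} x^{wt(X j)}`.  Since
`π_i(f) = (x_i - x_{i+1})⁻¹ (x_i f - s_i (x_i f))`, the conclusion is stated
in the equivalent multiplied-through form
`(x_i - x_{i+1}) ∑_j x^{wt(X j)} = x_i x^{wt(X 0)} - s_i (x_i x^{wt(X 0)})`,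
where `s_i (x_i x^{wt(X 0)}) = x_{i+1} x^{s_i (wt(X 0))}`. -/
theorem iString_sum (n : ℕ) (B : Type*) [Nonempty B]
    (e f : ℕ → B → Option B) (eps phi : ℕ → B → ℤ) (wt : B → ℕ → ℤ)
    (hK1 : ∀ i X Y, i + 1 < n → (e i X = some Y ↔ f i Y = some X))
    (hK1' : ∀ i X Y, i + 1 < n → e i X = some Y →
      eps i Y = eps i X - 1 ∧ phi i Y = phi i X + 1 ∧
      wt Y = fun j => wt X j + (if j = i then 1 else 0) - (if j = i + 1 then 1 else 0))
    (hK2 : ∀ i X, i + 1 < n → phi i X = (wt X i - wt X (i+1)) + eps i X)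
    (hseminormal_e : ∀ i X, i + 1 < n → ∀ k : ℕ,
      (iterO (e i) k X ≠ none ↔ (k : ℤ) ≤ eps i X))
    (hseminormal_f : ∀ i X, i + 1 < n → ∀ k : ℕ,
      (iterO (f i) k X ≠ none ↔ (k : ℤ) ≤ phi i X))
    (i : ℕ) (hi : i + 1 < n) (k : ℕ) (X : ℕ → B)
    (h0 : e i (X 0) = none) (hk : f i (X k) = none)
    (hstep : ∀ j, j < k → f i (X j) = some (X (j+1))) :
    (monom (Pi.single i 1) - monom (Pi.single (i+1) 1)) *
        (∑ j ∈ Finset.range (k+1), monom (wt (X j))) =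
      monom (wt (X 0) + Pi.single i 1) -
        monom (wt (X 0) ∘ (Equiv.swap i (i+1)) + Pi.single (i+1) 1) :=
  iString_sum_general n B e f eps phi wt hK1 hK1' hK2 hseminormal_e hseminormal_f i hi k X h0 hk
    hstep
end
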